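/- arXiv:1907.03216 — 3 statements merged into one kernel-verified Lean document; each statement's English description precedes it below -/
import Mathlib

section
/- Let G be a finite group, K a core-free maximal subgroup of G, and H a nilpotent normal subgroup of G. Then H is abelian and H ∩ K = {1}. -/
/-!
The commutator subgroup `⁅H, H⁆` is normal in `G`, so it either lies in `K`, hence in the core of
`K`, and is trivial, or it supplements `K`. In the latter case the modular law gives
`H = ⁅H, H⁆ (H ⊓ K)`; but in the finite nilpotent group `H` every maximal subgroup is normal with
abelian quotient, so `⁅H, H⁆` lies in the Frattini subgroup and `H ≤ K`, a contradiction.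
Once `H` is abelian, `H ⊓ K` is normalised by `H` and by `K`; if `H ⊄ K` these generate `G`, so
`H ⊓ K` is normal and contained in the core of `K`.
-/

open Subgroup

namespace Subgroup

variable {G : Type*} [Group G]

theorem commutator_le_of_isCoatom_of_normal {C : Subgroup G} [C.Normal] (hC : IsCoatom C) :
    _root_.commutator G ≤ C := by
  obtain ⟨g, hg⟩ : ∃ g, g ∉ C := SetLike.exists_not_mem_of_ne_top C hC.1 rfl
  have hsup : C ⊔ zpowers g = ⊤ := hC.2 _ (left_lt_sup.mpr fun h => hg (h (mem_zpowers g)))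
  exact Normal.commutator_le_of_self_sup_commutative_eq_top hsup inferInstance

theorem sup_inf_assoc_of_normal_of_le {N C : Subgroup G} [N.Normal] (B : Subgroup G) (h : N ≤ C) :
    (N ⊔ B) ⊓ C = N ⊔ B ⊓ C := by
  apply SetLike.coe_injective
  rw [normal_mul, coe_inf, normal_mul, mul_inf_assoc _ _ _ h]

end Subgroup

theorem commutator_le_frattini {N : Type*} [Group N] [Finite N] (hN : Group.IsNilpotent N) :
    commutator N ≤ frattini N := by
  have hnormal : ∀ C : Subgroup N, IsCoatom C → C.Normal :=
    ((Group.isNilpotent_of_finite_tfae (G := N)).out 0 2).mp hN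
  exact le_iInf₂ fun C hC => have := hnormal C hC; commutator_le_of_isCoatom_of_normal hC

namespace Subgroup

variable {G : Type*} [Group G]

theorem eq_of_sup_commutator_eq {H M : Subgroup G} [Finite H] (hH : Group.IsNilpotent H)
    (h : M ⊔ ⁅H, H⁆ = H) : M = H := by
  have hMH : M ≤ H := h ▸ le_sup_left
  have htop : M.subgroupOf H ⊔ frattini H = ⊤ := by
    refine eq_top_iff.mpr (le_trans ?_ (sup_le_sup_left (commutator_le_frattini hH) _))
    apply (map_le_map_iff_of_injective H.subtype_injective).mp
    rw [map_sup, subgroupOf_map_subtype, _root_.commutator_def, map_commutator,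
      ← MonoidHom.range_eq_map, range_subtype, inf_of_le_left hMH, h]
  exact le_antisymm hMH (subgroupOf_eq_top.mp (frattini_nongenerating htop))

variable {K : Subgroup G}

theorem eq_bot_of_le_of_normalCore_eq_bot (hcf : K.normalCore = ⊥) {N : Subgroup G} [N.Normal]
    (h : N ≤ K) : N = ⊥ :=
  le_bot_iff.mp (hcf ▸ normal_le_normalCore.mpr h)

theorem eq_bot_or_sup_eq_top_of_normalCore_eq_bot (hK : IsCoatom K) (hcf : K.normalCore = ⊥)
    (N : Subgroup G) [N.Normal] : N = ⊥ ∨ N ⊔ K = ⊤ := by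
  by_cases h : N ≤ K
  · exact .inl (eq_bot_of_le_of_normalCore_eq_bot hcf h)
  · exact .inr (hK.2 _ (right_lt_sup.mpr h))

theorem normal_inf_of_isMulCommutative_of_sup_eq_top {H : Subgroup G} [H.Normal]
    (hH : IsMulCommutative H) (hHK : H ⊔ K = ⊤) : (H ⊓ K).Normal := by
  have hH_le : H ≤ normalizer (H ⊓ K : Subgroup G) :=
    (le_centralizer_iff_isMulCommutative.mpr hH).trans
      ((centralizer_le inf_le_left).trans (centralizer_le_normalizer _))
  have hK_le : K ≤ normalizer (H ⊓ K : Subgroup G) :=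
    (le_inf le_normalizer_of_normal K.le_normalizer).trans inf_normalizer_le_normalizer_inf
  exact normalizer_eq_top_iff.mp (eq_top_iff.mpr (hHK ▸ sup_le hH_le hK_le))

end Subgroup

theorem stmt0 {G : Type*} [Group G] [Finite G] (K H : Subgroup G)
    (hmax : IsCoatom K) (hcf : K.normalCore = ⊥)
    (hHnormal : H.Normal) (hnil : Group.IsNilpotent ↥H) :
    (∀ a b : ↥H, a * b = b * a) ∧ H ⊓ K = ⊥ := by
  have hD : ⁅H, H⁆ = ⊥ := by
    refine (eq_bot_or_sup_eq_top_of_normalCore_eq_bot hmax hcf ⁅H, H⁆).resolve_right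
      fun hsup => ?_
    have hKH : K ⊓ H = H := eq_of_sup_commutator_eq hnil <| by
      rw [sup_comm, ← sup_inf_assoc_of_normal_of_le K (commutator_le_left H H), hsup, top_inf_eq]
    have hDK : ⁅H, H⁆ ≤ K := (commutator_le_left H H).trans (inf_eq_right.mp hKH)
    exact hmax.1 (sup_eq_right.mpr hDK ▸ hsup)
  have hcomm : IsMulCommutative H :=
    le_centralizer_iff_isMulCommutative.mp (commutator_eq_bot_iff_le_centralizer.mp hD)
  refine ⟨hcomm.is_comm.comm, ?_⟩
  rcases eq_bot_or_sup_eq_top_of_normalCore_eq_bot hmax hcf H with hbot | hsup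
  · rw [hbot, bot_inf_eq]
  · have := normal_inf_of_isMulCommutative_of_sup_eq_top hcomm hsup
    exact eq_bot_of_le_of_normalCore_eq_bot hcf inf_le_right
end

section
/- Let G be a finite group acting faithfully and primitively on a set M with |M| > 1, and let H be a nilpotent normal subgroup of G. If some element h ∈ H fixes a point of M, then h = 1. -/
/-! By primitivity the stabilizer `K` of `m` is a maximal subgroup. The normalizer of `H ⊓ K`
contains `K`, and, unless `H ≤ K`, the normalizer condition of the nilpotent group `H` supplies an
element of it outside `K`; so `H ⊓ K` is normal in `G`. A normal subgroup fixing one point of a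
transitive action fixes every point, so by faithfulness `H ⊓ K`, which contains `h`, is trivial. -/

/-- A primitive action: transitive and every block is trivial. -/
def IsPrimitiveAction (G M : Type*) [Group G] [MulAction G M] : Prop :=
  MulAction.IsPretransitive G M ∧
    ∀ B : Set M, MulAction.IsBlock G B → MulAction.IsTrivialBlock B

namespace Subgroup

variable {G : Type*} [Group G]

theorem exists_mem_normalizer_notMem_of_lt {H L : Subgroup G} [Group.IsNilpotent H]
    (hLH : L < H) : ∃ x ∈ H, x ∈ normalizer (L : Set G) ∧ x ∉ L := by
  have hL : L.subgroupOf H < ⊤ :=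
    lt_top_iff_ne_top.mpr fun h => hLH.not_ge (subgroupOf_eq_top.mp h)
  obtain ⟨x, hx, hxL⟩ := SetLike.exists_of_lt (Group.normalizerCondition_of_isNilpotent _ hL)
  rw [← subgroupOf_normalizer_eq hLH.le] at hx
  exact ⟨x, x.2, hx, hxL⟩

theorem normal_inf_of_isCoatom {H K : Subgroup G} [H.Normal] [Group.IsNilpotent H]
    (hK : IsCoatom K) : (H ⊓ K).Normal := by
  by_cases hHK : H ≤ K
  · rwa [inf_eq_left.mpr hHK]
  have hK_le : K ≤ normalizer (H ⊓ K : Subgroup G) :=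
    (le_inf le_normalizer_of_normal K.le_normalizer).trans inf_normalizer_le_normalizer_inf
  obtain ⟨x, hxH, hx, hxHK⟩ := exists_mem_normalizer_notMem_of_lt
    (inf_le_left.lt_of_ne fun h => hHK (h ▸ inf_le_right) : H ⊓ K < H)
  exact normalizer_eq_top_iff.mp <| hK.2 _ <| hK_le.lt_of_ne fun h => hxHK ⟨hxH, h.ge hx⟩

end Subgroup

namespace MulAction

variable {G M : Type*} [Group G] [MulAction G M]

theorem smul_eq_self_of_mem_of_normal_le_stabilizer [IsPretransitive G M] {N : Subgroup G}
    [N.Normal] {m : M} (hN : N ≤ stabilizer G m) {n : G} (hn : n ∈ N) (x : M) : n • x = x := by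
  obtain ⟨g, rfl⟩ := exists_smul_eq G m x
  have : g⁻¹ * n * g ∈ stabilizer G m := hN (Subgroup.Normal.conj_mem' ‹_› n hn g)
  rwa [mem_stabilizer_iff, mul_smul, mul_smul, inv_smul_eq_iff] at this

theorem eq_one_of_mem_of_normal_le_stabilizer [IsPretransitive G M] [FaithfulSMul G M]
    {N : Subgroup G} [N.Normal] {m : M} (hN : N ≤ stabilizer G m) {n : G} (hn : n ∈ N) : n = 1 :=
  eq_of_smul_eq_smul fun x => (smul_eq_self_of_mem_of_normal_le_stabilizer hN hn x).trans
    (one_smul G x).symm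

end MulAction

theorem IsPrimitiveAction.isPreprimitive {G M : Type*} [Group G] [MulAction G M]
    (h : IsPrimitiveAction G M) : MulAction.IsPreprimitive G M :=
  { h.1 with isTrivialBlock_of_isBlock := fun hB => h.2 _ hB }

theorem stmt7_general {G M : Type*} [Group G] [MulAction G M] [Nontrivial M]
    [FaithfulSMul G M] (hprim : IsPrimitiveAction G M)
    (H : Subgroup G) (hHnormal : H.Normal) (hnil : Group.IsNilpotent ↥H)
    (h : G) (hh : h ∈ H) (m : M) (hfix : h • m = m) : h = 1 := by
  have := hprim.isPreprimitive
  have : (H ⊓ MulAction.stabilizer G m).Normal :=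
    Subgroup.normal_inf_of_isCoatom <|
      MulAction.IsPreprimitive.isCoatom_stabilizer_of_isPreprimitive G m
  exact MulAction.eq_one_of_mem_of_normal_le_stabilizer inf_le_right ⟨hh, hfix⟩

theorem stmt7 {G M : Type*} [Group G] [Finite G] [MulAction G M] [Nontrivial M]
    [FaithfulSMul G M] (hprim : IsPrimitiveAction G M)
    (H : Subgroup G) (hHnormal : H.Normal) (hnil : Group.IsNilpotent ↥H)
    (h : G) (hh : h ∈ H) (m : M) (hfix : h • m = m) : h = 1 :=
  stmt7_general hprim H hHnormal hnil h hh m hfix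
end

section
/- Let G be a finite group, H a nilpotent normal subgroup, and K a core-free maximal subgroup of G. Then every element of H ∩ K equals the identity; in particular, if h ∈ H stabilizes the coset K in the action of G on G/K, then h = 1. -/
/-!
If `H` were not contained in `K`, the normalizer condition in the nilpotent group `H` would give an
element of `H \ K` normalizing `H ⊓ K`; since `K` also normalizes `H ⊓ K` (as `H` is normal) and
`K` is maximal, `H ⊓ K` is normal in `G`. The same holds trivially when `H ≤ K`. A normal subgroup
of `G` inside `K` lies in the core of `K`, which is trivial.
-/

namespace Subgroup

variable {G : Type*} [Group G]

theorem le_normalizer_inf_of_normal (H K : Subgroup G) [H.Normal] :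
    K ≤ normalizer ((H ⊓ K : Subgroup G) : Set G) :=
  (le_inf le_normalizer_of_normal K.le_normalizer).trans inf_normalizer_le_normalizer_inf

theorem inf_eq_bot_of_isCoatom_of_normalCore_eq_bot {H K : Subgroup G} [H.Normal]
    [Group.IsNilpotent H] (hK : IsCoatom K) (hcore : K.normalCore = ⊥) : H ⊓ K = ⊥ := by
  have := normal_inf_of_isCoatom (H := H) hK
  exact le_bot_iff.mp <| hcore ▸ normal_le_normalCore.mpr inf_le_right

end Subgroup

theorem stmt17_general {G : Type*} [Group G] (H K : Subgroup G)
    (hnil : Group.IsNilpotent ↥H) (hHnormal : H.Normal)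
    (hmax : IsCoatom K) (hcf : K.normalCore = ⊥) :
    (∀ h ∈ H ⊓ K, h = 1) ∧
      (∀ h ∈ H, h • (QuotientGroup.mk (1 : G) : G ⧸ K) = QuotientGroup.mk 1 → h = 1) := by
  have hHK : H ⊓ K = ⊥ := Subgroup.inf_eq_bot_of_isCoatom_of_normalCore_eq_bot hmax hcf
  have htrivial : ∀ h ∈ H ⊓ K, h = 1 := fun h hh => by rwa [hHK, Subgroup.mem_bot] at hh
  refine ⟨htrivial, fun h hH hfix => htrivial h ⟨hH, ?_⟩⟩
  rw [← MulAction.stabilizer_quotient K]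
  exact hfix

theorem stmt17 {G : Type*} [Group G] [Finite G] (H K : Subgroup G)
    (hnil : Group.IsNilpotent ↥H) (hHnormal : H.Normal)
    (hmax : IsCoatom K) (hcf : K.normalCore = ⊥) :
    (∀ h ∈ H ⊓ K, h = 1) ∧
      (∀ h ∈ H, h • (QuotientGroup.mk (1 : G) : G ⧸ K) = QuotientGroup.mk 1 → h = 1) :=
  stmt17_general H K hnil hHnormal hmax hcf
end
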